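/- Let n_1, n_2 be nonnegative integers, λ1 a special symplectic partition of 2n_1 and λ2 a special orthogonal partition of 2n_2. Then every element of J^+ is odd, every element of J^− is even, J^+ and J^− are finite sets with the same cardinality r, and writing J^+ = {j_1^+ < … < j_r^+} and J^− = {j_1^− < … < j_r^−}, one has the interleaving j_1^+ < j_1^− < j_2^+ < j_2^− < … < j_r^+ < j_r^−. -/

import Mathlib

open Classical

namespace Wald

/-- `S f k = λ_1 + … + λ_k` (partitions are indexed from 1; index 0 is unused). -/
def S (f : ℕ → ℕ) (k : ℕ) : ℕ := ∑ j ∈ Finset.Icc 1 k, f j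

/-- `f` represents a partition of `N`: nonincreasing on indices `≥ 1`,
finitely many nonzero terms, with total sum `N`. -/
structure IsPartition (f : ℕ → ℕ) (N : ℕ) : Prop where
  mono : ∀ ⦃j k : ℕ⦄, 1 ≤ j → j ≤ k → f k ≤ f j
  fin : ∃ m, ∀ j, m < j → f j = 0
  total : ∀ m, (∀ j, m < j → f j = 0) → S f m = N

/-- multiplicity of `i` as a term of the partition -/
noncomputable def mult (f : ℕ → ℕ) (i : ℕ) : ℕ := Set.ncard {j : ℕ | 1 ≤ j ∧ f j = i}

/-- dominance order: `Dom f g ↔ f ≤ g` -/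
def Dom (f g : ℕ → ℕ) : Prop := ∀ k, S f k ≤ S g k

/-- transposed partition: `(transpose f) j = #{i ≥ 1 : f i ≥ j}` for `j ≥ 1` -/
noncomputable def transpose (f : ℕ → ℕ) : ℕ → ℕ :=
  fun j => Set.ncard {i : ℕ | 1 ≤ i ∧ 1 ≤ j ∧ j ≤ f i}

/-- union of two partitions (all terms listed together in nonincreasing order);
it is characterized by `transpose (unionP f g) = transpose f + transpose g`. -/
noncomputable def unionP (f g : ℕ → ℕ) : ℕ → ℕ :=
  transpose (fun j => transpose f j + transpose g j)

/-- the partition `(1)` -/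
def one1 : ℕ → ℕ := fun j => if j = 1 then 1 else 0

/-- symplectic partition: every odd `i ≥ 1` has even multiplicity -/
def Symp (f : ℕ → ℕ) : Prop := ∀ i, Odd i → Even (mult f i)

/-- orthogonal partition: every even `i ≥ 2` has even multiplicity -/
def Orth (f : ℕ → ℕ) : Prop := ∀ i, Even i → 1 ≤ i → Even (mult f i)

/-- `λ_{2j-1} ≡ λ_{2j} (mod 2)` for all `j ≥ 1` (speciality for symplectic
partitions of `2n` and orthogonal partitions of `2n`). -/
def SpecialPairs (f : ℕ → ℕ) : Prop := ∀ j, 1 ≤ j → f (2*j - 1) % 2 = f (2*j) % 2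

/-- speciality for orthogonal partitions of `2n+1`: `λ_1` odd and
`λ_{2j} ≡ λ_{2j+1} (mod 2)` for all `j ≥ 1`. -/
def SpecialOrthOdd (f : ℕ → ℕ) : Prop :=
  Odd (f 1) ∧ ∀ j, 1 ≤ j → f (2*j) % 2 = f (2*j + 1) % 2

/-- `Jord_bp` for symplectic partitions: even `i ≥ 2` with positive multiplicity -/
def JordbpS (f : ℕ → ℕ) : Set ℕ := {i | Even i ∧ 2 ≤ i ∧ 1 ≤ mult f i}

/-- `Jord_bp` for orthogonal partitions: odd `i ≥ 1` with positive multiplicity -/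
def JordbpO (f : ℕ → ℕ) : Set ℕ := {i | Odd i ∧ 1 ≤ mult f i}

/-- the set `{i_1 > … > i_m}` of terms with odd multiplicity -/
def OddSet (f : ℕ → ℕ) : Set ℕ := {i | Odd (mult f i)}

/-- for special symplectic partitions: `{i_1 > … > i_{m'}}`, with `0` added if `m` is odd -/
def Dsymp (f : ℕ → ℕ) : Set ℕ :=
  {i | Odd (mult f i) ∨ (i = 0 ∧ Odd (OddSet f).ncard)}

/-- `a = i_{2h-1}` and `b = i_{2h}` for some `h`: consecutive elements of `Dsymp f`
with an even number of elements of `Dsymp f` above `a`. -/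
def PairedS (f : ℕ → ℕ) (a b : ℕ) : Prop :=
  b < a ∧ a ∈ Dsymp f ∧ b ∈ Dsymp f ∧ Even ((Dsymp f ∩ Set.Ioi a).ncard) ∧
    Dsymp f ∩ Set.Ioo b a = ∅

/-- intervals of a special symplectic partition of `2n` -/
def IsIntervalS (f : ℕ → ℕ) (Δ : Set ℕ) : Prop :=
  (∃ a b, PairedS f a b ∧ Δ = {i | (i = 0 ∨ 1 ≤ mult f i) ∧ b ≤ i ∧ i ≤ a}) ∨
  (∃ i, Even i ∧ (i = 0 ∨ (2 ≤ i ∧ 1 ≤ mult f i)) ∧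
    (¬ ∃ a b, PairedS f a b ∧ b ≤ i ∧ i ≤ a) ∧ Δ = {i})

/-- `a = i_{2h-1}` and `b = i_{2h}` for some `h` (orthogonal partitions of `2n`) -/
def PairedOE (f : ℕ → ℕ) (a b : ℕ) : Prop :=
  b < a ∧ a ∈ OddSet f ∧ b ∈ OddSet f ∧ Even ((OddSet f ∩ Set.Ioi a).ncard) ∧
    OddSet f ∩ Set.Ioo b a = ∅

/-- intervals of a special orthogonal partition of `2n` -/
def IsIntervalOE (f : ℕ → ℕ) (Δ : Set ℕ) : Prop :=
  (∃ a b, PairedOE f a b ∧ Δ = {i | 1 ≤ mult f i ∧ b ≤ i ∧ i ≤ a}) ∨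
  (∃ i, Odd i ∧ 1 ≤ mult f i ∧ (¬ ∃ a b, PairedOE f a b ∧ b ≤ i ∧ i ≤ a) ∧ Δ = {i})

/-- `a = i_{2h}` and `b = i_{2h+1}` for some `h ≥ 1` (orthogonal partitions of `2n+1`) -/
def PairedOO (f : ℕ → ℕ) (a b : ℕ) : Prop :=
  b < a ∧ a ∈ OddSet f ∧ b ∈ OddSet f ∧ Odd ((OddSet f ∩ Set.Ioi a).ncard) ∧
    OddSet f ∩ Set.Ioo b a = ∅

/-- intervals of a special orthogonal partition of `2n+1` (convention `i_0 = ∞`) -/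
def IsIntervalOO (f : ℕ → ℕ) (Δ : Set ℕ) : Prop :=
  (∃ b, b ∈ OddSet f ∧ OddSet f ∩ Set.Ioi b = ∅ ∧ Δ = {i | 1 ≤ mult f i ∧ b ≤ i}) ∨
  (∃ a b, PairedOO f a b ∧ Δ = {i | 1 ≤ mult f i ∧ b ≤ i ∧ i ≤ a}) ∨
  (∃ i, Odd i ∧ 1 ≤ mult f i ∧
    (¬ ((∃ b, b ∈ OddSet f ∧ OddSet f ∩ Set.Ioi b = ∅ ∧ b ≤ i) ∨
        (∃ a b, PairedOO f a b ∧ b ≤ i ∧ i ≤ a))) ∧ Δ = {i})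

/-- `J(Δ) = {j ≥ 1 : λ_j ∈ Δ}` -/
def Jset (f : ℕ → ℕ) (Δ : Set ℕ) : Set ℕ := {j | 1 ≤ j ∧ f j ∈ Δ}

/-- `ζ(λ)` for a special symplectic partition (`j_max(Δ_min) = ∞`, so the smallest
interval contributes no `-1`: its `J`-set has no greatest element). -/
noncomputable def zetaS (f : ℕ → ℕ) : ℕ → ℤ := fun j =>
  if ∃ Δ, IsIntervalS f Δ ∧ IsLeast (Jset f Δ) j then 1
  else if ∃ Δ, IsIntervalS f Δ ∧ IsGreatest (Jset f Δ) j then -1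
  else 0

/-- `ζ(λ)` for a special orthogonal partition of `2n` -/
noncomputable def zetaOE (f : ℕ → ℕ) : ℕ → ℤ := fun j =>
  if ∃ Δ, IsIntervalOE f Δ ∧ IsLeast (Jset f Δ) j then 1
  else if ∃ Δ, IsIntervalOE f Δ ∧ IsGreatest (Jset f Δ) j then -1
  else 0

/-- `J^+` for `λ1` special symplectic and `λ2` special orthogonal (of `2n2`) -/
def JplusSet (f1 f2 : ℕ → ℕ) : Set ℕ :=
  {j | 1 ≤ j ∧ Even (f1 j) ∧ Odd (f2 j) ∧
    ((∃ Δ, IsIntervalS f1 Δ ∧ IsLeast (Jset f1 Δ) j) ∨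
     (∃ Δ, IsIntervalOE f2 Δ ∧ IsLeast (Jset f2 Δ) j))}

/-- `J^-` -/
def JminusSet (f1 f2 : ℕ → ℕ) : Set ℕ :=
  {j | 1 ≤ j ∧ Even (f1 j) ∧ Odd (f2 j) ∧
    ((∃ Δ, IsIntervalS f1 Δ ∧ IsGreatest (Jset f1 Δ) j) ∨
     (∃ Δ, IsIntervalOE f2 Δ ∧ IsGreatest (Jset f2 Δ) j))}

/-- the sequence `ξ` -/
noncomputable def xi (f1 f2 : ℕ → ℕ) : ℕ → ℤ := fun j =>
  if j ∈ JplusSet f1 f2 then 1 else if j ∈ JminusSet f1 f2 then -1 else 0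

/-- partial sums of an integer-valued sequence indexed from 1 -/
def Sz (f : ℕ → ℤ) (k : ℕ) : ℤ := ∑ j ∈ Finset.Icc 1 k, f j

/-- `g` is the greatest orthogonal partition of `N` which is dominated by the
sequence `t` (used to define the Spaltenstein-type duality `d`). -/
def IsDualOf (g : ℕ → ℕ) (N : ℕ) (t : ℕ → ℕ) : Prop :=
  (IsPartition g N ∧ Orth g ∧ Dom g t) ∧
  ∀ ν, IsPartition ν N → Orth ν → Dom ν t → Dom ν g

/-- `g = d(f)` for `f` a symplectic partition of `2m`: the greatest orthogonal
partition of `2m+1` dominated by `^t(f ∪ (1))`. -/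
def IsSympDual (g : ℕ → ℕ) (m : ℕ) (f : ℕ → ℕ) : Prop :=
  IsDualOf g (2*m+1) (transpose (unionP f one1))

/-- `g = d(f)` for `f` an orthogonal partition of `2m`: the greatest orthogonal
partition of `2m` dominated by `^tf`. -/
def IsOrthDual (g : ℕ → ℕ) (m : ℕ) (f : ℕ → ℕ) : Prop :=
  IsDualOf g (2*m) (transpose f)

/-!
For `j ≥ 1` with `λ1_j` even, `j` lies in the block `J(Δ)` of a unique interval `Δ` of `λ1`, and
these blocks are runs of consecutive indices; likewise for `λ2_j` odd and the intervals of `λ2`.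
`J^+` and `J^-` are the first and last indices of blocks inside the region covered by both
families. From an index of that region, going up one stays in the intersection of its two blocks
until one of them ends, at an element of `J^-`, without passing the start of any block; going down
is symmetric. So, once `J^+` and `J^-` are disjoint, their elements alternate, beginning with `J^+`
and ending with `J^-`.

Disjointness is a parity statement. The number of parts `≥ x` has the parity of the number of
odd-multiplicity values `≥ x`; speciality (`λ_{2j-1} ≡ λ_{2j}`) together with the way intervals pair
up the odd-multiplicity values makes the latter even just above an interval and from its lowest
value upward, so blocks start at odd indices and end at even ones.
-/

theorem _root_.Set.OrdConnected.isGreatest_or_isGreatest_of_inter {α : Type*} [LinearOrder α]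
    {s t : Set α} {a : α} (hs : s.OrdConnected) (ht : t.OrdConnected)
    (h : IsGreatest (s ∩ t) a) : IsGreatest s a ∨ IsGreatest t a := by
  by_contra! hne
  obtain ⟨x, hxs, hax⟩ : ∃ x ∈ s, a < x := by
    simpa [IsGreatest, upperBounds, h.1.1] using hne.1
  obtain ⟨y, hyt, hay⟩ : ∃ y ∈ t, a < y := by
    simpa [IsGreatest, upperBounds, h.1.2] using hne.2
  have hmem : min x y ∈ s ∩ t :=
    ⟨hs.out h.1.1 hxs ⟨(lt_min hax hay).le, min_le_left x y⟩,
      ht.out h.1.2 hyt ⟨(lt_min hax hay).le, min_le_right x y⟩⟩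
  exact (h.2 hmem).not_gt (lt_min hax hay)

theorem _root_.Set.OrdConnected.isLeast_or_isLeast_of_inter {α : Type*} [LinearOrder α]
    {s t : Set α} {a : α} (hs : s.OrdConnected) (ht : t.OrdConnected)
    (h : IsLeast (s ∩ t) a) : IsLeast s a ∨ IsLeast t a :=
  hs.dual.isGreatest_or_isGreatest_of_inter (a := OrderDual.toDual a) ht.dual h

section Interleaving

variable {α : Type*} [LinearOrder α] {A B : Set α} {n : ℕ} {e : Fin n → α}

theorem succ_mem_iff_not_mem (he : StrictMono e) (hrange : Set.range e = A ∪ B)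
    (hAB : Disjoint A B) (hup : ∀ a ∈ A, ∃ b ∈ B, a < b ∧ ∀ a' ∈ A, a < a' → b < a')
    (hdown : ∀ b ∈ B, ∃ a ∈ A, a < b ∧ ∀ b' ∈ B, b' < b → b' < a) {k : ℕ} (hk : k + 1 < n) :
    e ⟨k + 1, hk⟩ ∈ A ↔ e ⟨k, by omega⟩ ∉ A := by
  have hB : ∀ i, e i ∈ B ↔ e i ∉ A := fun i =>
    ⟨fun hi hiA => hAB.notMem_of_mem_left hiA hi,
      (show e i ∈ A ∪ B from hrange ▸ Set.mem_range_self i).resolve_left⟩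
  have hlt : e ⟨k, by omega⟩ < e ⟨k + 1, hk⟩ := he (Fin.mk_lt_mk.2 k.lt_succ_self)
  have hgap : ∀ x ∈ A ∪ B, e ⟨k, by omega⟩ < x → e ⟨k + 1, hk⟩ ≤ x := by
    intro x hx hkx
    obtain ⟨i, rfl⟩ : x ∈ Set.range e := hrange ▸ hx
    exact he.monotone (Fin.le_def.2 (Nat.succ_le_of_lt (he.lt_iff_lt.1 hkx)))
  constructor
  · intro hA hkA
    obtain ⟨b, hb, hkb, hb'⟩ := hup _ hkA
    exact (hgap b (Or.inr hb) hkb).not_gt (hb' _ hA hlt)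
  · intro hkA
    by_contra hA
    obtain ⟨a, ha, hak, ha'⟩ := hdown _ ((hB _).2 hA)
    exact (hgap a (Or.inl ha) (ha' _ ((hB _).2 hkA) hlt)).not_gt hak

theorem mem_iff_even_of_strictMono (he : StrictMono e) (hrange : Set.range e = A ∪ B)
    (hAB : Disjoint A B) (hup : ∀ a ∈ A, ∃ b ∈ B, a < b ∧ ∀ a' ∈ A, a < a' → b < a')
    (hdown : ∀ b ∈ B, ∃ a ∈ A, a < b ∧ ∀ b' ∈ B, b' < b → b' < a) :
    (∀ k, e k ∈ A ↔ Even (k : ℕ)) ∧ Even n := by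
  have hindex : ∀ x ∈ A ∪ B, ∃ k, e k = x := fun x hx => (hrange.symm ▸ hx : x ∈ Set.range e)
  have halt : ∀ (k : ℕ) (hk : k < n), e ⟨k, hk⟩ ∈ A ↔ Even k := by
    intro k
    induction k with
    | zero =>
      refine fun hk => iff_of_true (not_not.1 fun h0 => ?_) Even.zero
      have h0B : e ⟨0, hk⟩ ∈ B := (hrange ▸ Set.mem_range_self _ : e ⟨0, hk⟩ ∈ A ∪ B).resolve_left h0
      obtain ⟨a, ha, ha0, -⟩ := hdown _ h0B
      obtain ⟨i, rfl⟩ := hindex a (Or.inl ha)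
      exact Nat.not_lt_zero _ (he.lt_iff_lt.1 ha0)
    | succ k ih =>
      exact fun hk => by rw [succ_mem_iff_not_mem he hrange hAB hup hdown hk, ih, Nat.even_add_one]
  refine ⟨fun k => halt k k.2, Nat.even_iff.2 (not_not.1 fun hodd => ?_)⟩
  have hlast : e ⟨n - 1, by omega⟩ ∈ A := (halt _ _).2 (by rw [Nat.even_iff]; omega)
  obtain ⟨b, hb, hlb, -⟩ := hup _ hlast
  obtain ⟨i, rfl⟩ := hindex b (Or.inr hb)
  have := Fin.lt_def.1 (he.lt_iff_lt.1 hlb)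
  simp only at this
  omega

theorem exists_interleaving (hA : A.Finite) (hB : B.Finite) (hAB : Disjoint A B)
    (hup : ∀ a ∈ A, ∃ b ∈ B, a < b ∧ ∀ a' ∈ A, a < a' → b < a')
    (hdown : ∀ b ∈ B, ∃ a ∈ A, a < b ∧ ∀ b' ∈ B, b' < b → b' < a) :
    ∃ (r : ℕ) (jp jm : Fin r → α),
      A.ncard = r ∧ B.ncard = r ∧ StrictMono jp ∧ StrictMono jm ∧
      Set.range jp = A ∧ Set.range jm = B ∧ (∀ i, jp i < jm i) ∧
      ∀ (i : Fin r) (h : (i : ℕ) + 1 < r), jm i < jp ⟨(i : ℕ) + 1, h⟩ := by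
  set e := (hA.union hB).toFinset.orderEmbOfFin rfl
  have hrange : Set.range e = A ∪ B := by
    rw [Finset.range_orderEmbOfFin, Set.Finite.coe_toFinset]
  obtain ⟨halt, ⟨r, hr⟩⟩ := mem_iff_even_of_strictMono e.strictMono hrange hAB hup hdown
  have hindex : ∀ x ∈ A ∪ B, ∃ k, e k = x := fun x hx => (hrange.symm ▸ hx : x ∈ Set.range e)
  set jp : Fin r → α := fun i => e ⟨2 * i, by omega⟩
  set jm : Fin r → α := fun i => e ⟨2 * i + 1, by omega⟩
  have hjp : StrictMono jp := fun i j hij => e.strictMono (Fin.mk_lt_mk.2 (by omega))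
  have hjm : StrictMono jm := fun i j hij => e.strictMono (Fin.mk_lt_mk.2 (by omega))
  have hrange_jp : Set.range jp = A := by
    refine Set.Subset.antisymm (Set.range_subset_iff.2 fun i => (halt _).2 (even_two_mul _))
      fun x hx => ?_
    obtain ⟨k, rfl⟩ := hindex x (Or.inl hx)
    obtain ⟨i, hi⟩ := (halt k).1 hx
    exact ⟨⟨i, by omega⟩, congrArg e (Fin.ext (by simp only; omega))⟩
  have hrange_jm : Set.range jm = B := by
    refine Set.Subset.antisymm (Set.range_subset_iff.2 fun i => ?_) fun x hx => ?_
    · refine (show jm i ∈ A ∪ B from hrange ▸ Set.mem_range_self _).resolve_left ?_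
      simp [jm, halt]
    · obtain ⟨k, rfl⟩ := hindex x (Or.inr hx)
      obtain ⟨i, hi⟩ := Nat.not_even_iff_odd.1 ((halt k).not.1 (hAB.notMem_of_mem_right hx))
      exact ⟨⟨i, by omega⟩, congrArg e (Fin.ext (by simp only; omega))⟩
  refine ⟨r, jp, jm, ?_, ?_, hjp, hjm, hrange_jp, hrange_jm,
    fun i => e.strictMono (Fin.mk_lt_mk.2 (by omega)),
    fun i h => e.strictMono (Fin.mk_lt_mk.2 (by simp only; omega))⟩
  · rw [← hrange_jp, Set.ncard_range_of_injective hjp.injective, Nat.card_eq_fintype_card,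
      Fintype.card_fin]
  · rw [← hrange_jm, Set.ncard_range_of_injective hjm.injective, Nat.card_eq_fintype_card,
      Fintype.card_fin]

end Interleaving

section Blocks

structure IsBlockFamily (𝓙 : Set (Set ℕ)) : Prop where
  ordConnected : ∀ J ∈ 𝓙, J.OrdConnected
  pairwiseDisjoint : 𝓙.PairwiseDisjoint id

def blockStarts (𝓙₁ 𝓙₂ : Set (Set ℕ)) : Set ℕ :=
  {j | j ∈ ⋃₀ 𝓙₁ ∩ ⋃₀ 𝓙₂ ∧ ∃ J ∈ 𝓙₁ ∪ 𝓙₂, IsLeast J j}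

def blockEnds (𝓙₁ 𝓙₂ : Set (Set ℕ)) : Set ℕ :=
  {j | j ∈ ⋃₀ 𝓙₁ ∩ ⋃₀ 𝓙₂ ∧ ∃ J ∈ 𝓙₁ ∪ 𝓙₂, IsGreatest J j}

variable {𝓙₁ 𝓙₂ : Set (Set ℕ)}

theorem inter_subset_of_mem (h₁ : IsBlockFamily 𝓙₁) (h₂ : IsBlockFamily 𝓙₂)
    {J J₁ J₂ : Set ℕ} (hJ : J ∈ 𝓙₁ ∪ 𝓙₂) (hJ₁ : J₁ ∈ 𝓙₁) (hJ₂ : J₂ ∈ 𝓙₂)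
    {k : ℕ} (hk : k ∈ J) (hk₁₂ : k ∈ J₁ ∩ J₂) : J₁ ∩ J₂ ⊆ J := by
  rcases hJ with hJ | hJ
  · rw [h₁.pairwiseDisjoint.elim_set hJ hJ₁ k hk hk₁₂.1]
    exact Set.inter_subset_left
  · rw [h₂.pairwiseDisjoint.elim_set hJ hJ₂ k hk hk₁₂.2]
    exact Set.inter_subset_right

theorem exists_mem_blockEnds (h₁ : IsBlockFamily 𝓙₁) (h₂ : IsBlockFamily 𝓙₂)
    (hbdd : BddAbove (⋃₀ 𝓙₁ ∩ ⋃₀ 𝓙₂)) {j : ℕ} (hj : j ∈ ⋃₀ 𝓙₁ ∩ ⋃₀ 𝓙₂) :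
    ∃ m ∈ blockEnds 𝓙₁ 𝓙₂, j ≤ m ∧ ∀ k ∈ blockStarts 𝓙₁ 𝓙₂, j < k → m < k := by
  obtain ⟨⟨J₁, hJ₁, hj₁⟩, ⟨J₂, hJ₂, hj₂⟩⟩ := hj
  have hsub : J₁ ∩ J₂ ⊆ ⋃₀ 𝓙₁ ∩ ⋃₀ 𝓙₂ := fun k hk => ⟨⟨J₁, hJ₁, hk.1⟩, ⟨J₂, hJ₂, hk.2⟩⟩
  have hbdd' : BddAbove (J₁ ∩ J₂) := hbdd.mono hsub
  set m := sSup (J₁ ∩ J₂)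
  have hm : IsGreatest (J₁ ∩ J₂) m :=
    ⟨Nat.sSup_mem ⟨j, hj₁, hj₂⟩ hbdd', fun k hk => le_csSup hbdd' hk⟩
  have hc₁ := h₁.ordConnected J₁ hJ₁
  have hc₂ := h₂.ordConnected J₂ hJ₂
  refine ⟨m, ⟨hsub hm.1, ?_⟩, hm.2 ⟨hj₁, hj₂⟩, fun k ⟨_, J, hJ, hk⟩ hjk => ?_⟩
  · rcases hc₁.isGreatest_or_isGreatest_of_inter hc₂ hm with h | h
    exacts [⟨J₁, Or.inl hJ₁, h⟩, ⟨J₂, Or.inr hJ₂, h⟩]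
  by_contra! hkm
  have hk₁₂ : k ∈ J₁ ∩ J₂ := ⟨hc₁.out hj₁ hm.1.1 ⟨hjk.le, hkm⟩, hc₂.out hj₂ hm.1.2 ⟨hjk.le, hkm⟩⟩
  exact hjk.not_ge (hk.2 (inter_subset_of_mem h₁ h₂ hJ hJ₁ hJ₂ hk.1 hk₁₂ ⟨hj₁, hj₂⟩))

theorem exists_mem_blockStarts (h₁ : IsBlockFamily 𝓙₁) (h₂ : IsBlockFamily 𝓙₂)
    {j : ℕ} (hj : j ∈ ⋃₀ 𝓙₁ ∩ ⋃₀ 𝓙₂) :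
    ∃ m ∈ blockStarts 𝓙₁ 𝓙₂, m ≤ j ∧ ∀ k ∈ blockEnds 𝓙₁ 𝓙₂, k < j → k < m := by
  obtain ⟨⟨J₁, hJ₁, hj₁⟩, ⟨J₂, hJ₂, hj₂⟩⟩ := hj
  have hsub : J₁ ∩ J₂ ⊆ ⋃₀ 𝓙₁ ∩ ⋃₀ 𝓙₂ := fun k hk => ⟨⟨J₁, hJ₁, hk.1⟩, ⟨J₂, hJ₂, hk.2⟩⟩
  set m := sInf (J₁ ∩ J₂)
  have hm : IsLeast (J₁ ∩ J₂) m := ⟨Nat.sInf_mem ⟨j, hj₁, hj₂⟩, fun k hk => Nat.sInf_le hk⟩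
  have hc₁ := h₁.ordConnected J₁ hJ₁
  have hc₂ := h₂.ordConnected J₂ hJ₂
  refine ⟨m, ⟨hsub hm.1, ?_⟩, hm.2 ⟨hj₁, hj₂⟩, fun k ⟨_, J, hJ, hk⟩ hkj => ?_⟩
  · rcases hc₁.isLeast_or_isLeast_of_inter hc₂ hm with h | h
    exacts [⟨J₁, Or.inl hJ₁, h⟩, ⟨J₂, Or.inr hJ₂, h⟩]
  by_contra! hmk
  have hk₁₂ : k ∈ J₁ ∩ J₂ := ⟨hc₁.out hm.1.1 hj₁ ⟨hmk, hkj.le⟩, hc₂.out hm.1.2 hj₂ ⟨hmk, hkj.le⟩⟩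
  exact hkj.not_ge (hk.2 (inter_subset_of_mem h₁ h₂ hJ hJ₁ hJ₂ hk.1 hk₁₂ ⟨hj₁, hj₂⟩))

theorem exists_interleaving_blockStarts_blockEnds (h₁ : IsBlockFamily 𝓙₁)
    (h₂ : IsBlockFamily 𝓙₂) (hbdd : BddAbove (⋃₀ 𝓙₁ ∩ ⋃₀ 𝓙₂))
    (hdisj : Disjoint (blockStarts 𝓙₁ 𝓙₂) (blockEnds 𝓙₁ 𝓙₂)) :
    (blockStarts 𝓙₁ 𝓙₂).Finite ∧ (blockEnds 𝓙₁ 𝓙₂).Finite ∧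
    ∃ (r : ℕ) (jp jm : Fin r → ℕ),
      (blockStarts 𝓙₁ 𝓙₂).ncard = r ∧ (blockEnds 𝓙₁ 𝓙₂).ncard = r ∧
      StrictMono jp ∧ StrictMono jm ∧
      Set.range jp = blockStarts 𝓙₁ 𝓙₂ ∧ Set.range jm = blockEnds 𝓙₁ 𝓙₂ ∧
      (∀ i, jp i < jm i) ∧ ∀ (i : Fin r) (h : (i : ℕ) + 1 < r), jm i < jp ⟨(i : ℕ) + 1, h⟩ := by
  have hstarts : (blockStarts 𝓙₁ 𝓙₂).Finite := hbdd.finite.subset fun _ hj => hj.1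
  have hends : (blockEnds 𝓙₁ 𝓙₂).Finite := hbdd.finite.subset fun _ hj => hj.1
  refine ⟨hstarts, hends, exists_interleaving hstarts hends hdisj (fun a ha => ?_) (fun b hb => ?_)⟩
  · obtain ⟨m, hm, ham, hm'⟩ := exists_mem_blockEnds h₁ h₂ hbdd ha.1
    exact ⟨m, hm, ham.lt_of_ne (hdisj.ne_of_mem ha hm), hm'⟩
  · obtain ⟨m, hm, hmb, hm'⟩ := exists_mem_blockStarts h₁ h₂ hb.1
    exact ⟨m, hm, hmb.lt_of_ne (hdisj.ne_of_mem hm hb), hm'⟩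

end Blocks

section Partition

open Finset

variable {f : ℕ → ℕ} {N : ℕ}

theorem IsPartition.mult_zero (h : IsPartition f N) : mult f 0 = 0 := by
  obtain ⟨M, hM⟩ := h.fin
  refine Set.Infinite.ncard (Set.infinite_of_not_bddAbove fun ⟨b, hb⟩ => ?_)
  have := hb ⟨by omega, hM (max M b + 1) (by omega)⟩
  omega

theorem exists_apply_eq_of_one_le_mult {i : ℕ} (h : 1 ≤ mult f i) : ∃ j, 1 ≤ j ∧ f j = i :=
  Set.nonempty_of_ncard_ne_zero (s := {j | 1 ≤ j ∧ f j = i}) (Nat.one_le_iff_ne_zero.1 h)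

theorem IsPartition.one_le_of_one_le_mult (h : IsPartition f N) {i : ℕ} (hi : 1 ≤ mult f i) :
    1 ≤ i := by
  by_contra! h0
  rw [Nat.lt_one_iff.1 h0, h.mult_zero] at hi
  omega

theorem IsPartition.le_of_one_le_mult (h : IsPartition f N) {i : ℕ} (hi : 1 ≤ mult f i) :
    i ≤ f 1 := by
  obtain ⟨j, hj, rfl⟩ := exists_apply_eq_of_one_le_mult hi
  exact h.mono le_rfl hj

theorem IsPartition.one_le_mult_apply (h : IsPartition f N) {j : ℕ} (hj : 1 ≤ j) (hfj : f j ≠ 0) :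
    1 ≤ mult f (f j) := by
  obtain ⟨M, hM⟩ := h.fin
  have hfin : {k | 1 ≤ k ∧ f k = f j}.Finite :=
    (Set.finite_Iic M).subset fun k hk => not_lt.1 fun hMk => hfj (hk.2 ▸ hM k hMk)
  exact Nat.one_le_iff_ne_zero.2 ((Set.ncard_pos hfin).2 ⟨j, hj, rfl⟩).ne'

theorem IsPartition.oddSet_subset_Icc (h : IsPartition f N) : OddSet f ⊆ Set.Icc 1 (f 1) :=
  fun _ hi => ⟨h.one_le_of_one_le_mult hi.pos, h.le_of_one_le_mult hi.pos⟩

theorem IsPartition.oddSet_finite (h : IsPartition f N) : (OddSet f).Finite :=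
  (Set.finite_Icc _ _).subset h.oddSet_subset_Icc

theorem card_filter_eq_sum_mult {K : ℕ} (T : Finset ℕ) (hT : ∀ j, 1 ≤ j → f j ∈ T → j ≤ K) :
    #{j ∈ Icc 1 K | f j ∈ T} = ∑ v ∈ T, mult f v := by
  rw [card_eq_sum_card_fiberwise (s := {j ∈ Icc 1 K | f j ∈ T}) (f := f) (t := T)
    fun j hj => (mem_filter.1 hj).2]
  refine sum_congr rfl fun v hv => ?_
  rw [mult, ← Set.ncard_coe_finset]
  congr 1
  ext j
  simp only [coe_filter, mem_filter, mem_Icc, Set.mem_ofPred_eq]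
  constructor
  · rintro ⟨⟨⟨hj, -⟩, -⟩, hfj⟩
    exact ⟨hj, hfj⟩
  · rintro ⟨hj, rfl⟩
    exact ⟨⟨⟨hj, hT j hj hv⟩, hv⟩, rfl⟩

theorem even_sum_mult_iff (T : Finset ℕ) :
    Even (∑ v ∈ T, mult f v) ↔ Even (OddSet f ∩ ↑T).ncard := by
  rw [even_sum_iff_even_card_odd, ← Set.ncard_coe_finset]
  congr! 2
  ext v
  simp [OddSet, and_comm]

theorem IsPartition.even_iff_even_ncard_oddSet_Ici (h : IsPartition f N) {x K : ℕ}
    (hK : ∀ j, 1 ≤ j → (x ≤ f j ↔ j ≤ K)) : Even K ↔ Even (OddSet f ∩ Set.Ici x).ncard := by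
  have hcount : #{j ∈ Icc 1 K | f j ∈ Icc x (f 1)} = K := by
    rw [filter_true_of_mem fun j hj => ?_, Nat.card_Icc, Nat.add_sub_cancel]
    obtain ⟨hj, hjK⟩ := mem_Icc.1 hj
    exact mem_Icc.2 ⟨(hK j hj).2 hjK, h.mono le_rfl hj⟩
  have hset : OddSet f ∩ ↑(Icc x (f 1)) = OddSet f ∩ Set.Ici x := by
    ext v
    simp only [Set.mem_inter_iff, coe_Icc, Set.mem_Icc, Set.mem_Ici]
    exact ⟨fun hv => ⟨hv.1, hv.2.1⟩, fun hv => ⟨hv.1, hv.2, (h.oddSet_subset_Icc hv.1).2⟩⟩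
  rw [← hset, ← even_sum_mult_iff, ← card_filter_eq_sum_mult _ fun j hj hfj =>
    (hK j hj).1 (mem_Icc.1 hfj).1, hcount]

theorem SpecialPairs.even_card_filter_mod_two (hsp : SpecialPairs f) (p m : ℕ) :
    Even #{j ∈ Icc 1 (2 * m) | f j % 2 = p} := by
  induction m with
  | zero => simp
  | succ m ih =>
    have hpair := hsp (m + 1) (by omega)
    rw [show 2 * (m + 1) - 1 = 2 * m + 1 by omega, show 2 * (m + 1) = 2 * m + 1 + 1 by omega]
      at hpair
    rw [card_filter] at ih ⊢
    rw [show 2 * (m + 1) = 2 * m + 1 + 1 by omega, sum_Icc_succ_top (by omega),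
      sum_Icc_succ_top (by omega), ← hpair, add_assoc]
    split_ifs <;> simpa [Nat.even_add] using ih

theorem IsPartition.even_ncard_oddSet_Ioi (h : IsPartition f N) (hsp : SpecialPairs f) {p w : ℕ}
    (hp : ∀ i, 1 ≤ i → i % 2 = p → Even (mult f i)) (hw : w % 2 = p) (hmw : 1 ≤ mult f w) :
    Even (OddSet f ∩ Set.Ioi w).ncard := by
  have hex : ∃ j, 1 ≤ j ∧ f j = w := exists_apply_eq_of_one_le_mult hmw
  set s := Nat.find hex
  obtain ⟨hs, hfs⟩ : 1 ≤ s ∧ f s = w := Nat.find_spec hex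
  have hK : ∀ j, 1 ≤ j → (w + 1 ≤ f j ↔ j ≤ s - 1) := by
    refine fun j hj => ⟨fun hwj => ?_, fun hjs => ?_⟩
    · by_contra! hsj
      have := h.mono hs (show s ≤ j by omega)
      omega
    · have hsj := h.mono hj (show j ≤ s by omega)
      have hne : f j ≠ w := fun hfj => Nat.find_min hex (show j < s by omega) ⟨hj, hfj⟩
      omega
  rw [← Set.Ici_add_one_eq_Ioi, ← h.even_iff_even_ncard_oddSet_Ici hK]
  set T := {v ∈ Icc (w + 1) (f 1) | v % 2 = p}
  have hbefore : Even #{j ∈ Icc 1 (s - 1) | f j % 2 = p} := by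
    have hT : {j ∈ Icc 1 (s - 1) | f j % 2 = p} = {j ∈ Icc 1 (s - 1) | f j ∈ T} := by
      refine filter_congr fun j hj => ?_
      obtain ⟨hj, hjs⟩ := mem_Icc.1 hj
      simp [T, (hK j hj).2 hjs, h.mono le_rfl hj]
    rw [hT, card_filter_eq_sum_mult T fun j hj hfj =>
      (hK j hj).1 (mem_Icc.1 (mem_filter.1 hfj).1).1]
    exact even_sum _ fun v hv => hp v (by simp [T] at hv; omega) (mem_filter.1 hv).2
  -- `s` is odd: the earlier parts of parity `p` come in even multiplicities, so with `f s = w` the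
  -- first `s` parts contain an odd number of them, which `SpecialPairs` forbids for even `s`
  by_contra hodd
  obtain ⟨m, hm⟩ : ∃ m, s = 2 * m := ⟨s / 2, by rw [Nat.even_iff] at hodd; omega⟩
  have hall := hsp.even_card_filter_mod_two p m
  rw [← hm, card_filter, show s = s - 1 + 1 by omega, sum_Icc_succ_top (by omega),
    Nat.sub_add_cancel hs, hfs, if_pos hw, ← card_filter] at hall
  exact Nat.not_even_iff_odd.2 hbefore.add_one hall

theorem IsPartition.even_ncard_oddSet (h : IsPartition f N) (ho : Orth f) (hsp : SpecialPairs f) :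
    Even (OddSet f).ncard := by
  obtain ⟨M, hM⟩ := h.fin
  set T := {v ∈ Icc 1 (f 1) | v % 2 = 1}
  have hset : OddSet f ∩ ↑T = OddSet f := by
    refine Set.inter_eq_left.2 fun v hv => ?_
    have hv1 := h.oddSet_subset_Icc hv
    have : v % 2 = 1 := Nat.odd_iff.1 <| Nat.not_even_iff_odd.1 fun hve =>
      Nat.not_even_iff_odd.2 hv (ho v hve hv1.1)
    simp [T, hv1.1, hv1.2, this]
  have hT : {j ∈ Icc 1 (2 * M) | f j % 2 = 1} = {j ∈ Icc 1 (2 * M) | f j ∈ T} := by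
    refine filter_congr fun j hj => ?_
    have := h.mono le_rfl (mem_Icc.1 hj).1
    simp only [T, mem_filter, mem_Icc]
    omega
  rw [← hset, ← even_sum_mult_iff, ← card_filter_eq_sum_mult T fun j _ hfj => ?_, ← hT]
  · exact hsp.even_card_filter_mod_two 1 M
  · by_contra! hj
    have := hM j (by omega)
    simp [T, this] at hfj

end Partition

section Pairing

/-- `PairedS f` is `PairedIn (Dsymp f)` and `PairedOE f` is `PairedIn (OddSet f)`. -/
def PairedIn (D : Set ℕ) (a b : ℕ) : Prop :=
  b < a ∧ a ∈ D ∧ b ∈ D ∧ Even (D ∩ Set.Ioi a).ncard ∧ D ∩ Set.Ioo b a = ∅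

variable {D : Set ℕ} {a b x : ℕ}

theorem ncard_inter_Ioi_eq_add_one (hD : D.Finite) (ha : a ∈ D) (hxa : x < a)
    (hmin : ∀ y ∈ D, x < y → a ≤ y) : (D ∩ Set.Ioi x).ncard = (D ∩ Set.Ioi a).ncard + 1 := by
  have : D ∩ Set.Ioi x = insert a (D ∩ Set.Ioi a) := by
    ext y
    simp only [Set.mem_inter_iff, Set.mem_Ioi, Set.mem_insert_iff]
    constructor
    · rintro ⟨hy, hxy⟩
      rcases (hmin y hy hxy).eq_or_lt with rfl | hay
      exacts [Or.inl rfl, Or.inr ⟨hy, hay⟩]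
    · rintro (rfl | ⟨hy, hay⟩)
      exacts [⟨ha, hxa⟩, ⟨hy, hxa.trans hay⟩]
  rw [this, Set.ncard_insert_of_notMem (by simp) (hD.inter_of_left _)]

theorem PairedIn.le_of_mem (hp : PairedIn D a b) {y : ℕ} (hy : y ∈ D) (hby : b < y) : a ≤ y :=
  not_lt.1 fun hya => (Set.eq_empty_iff_forall_notMem.1 hp.2.2.2.2) y ⟨hy, hby, hya⟩

theorem PairedIn.ncard_inter_Ioi (hD : D.Finite) (hp : PairedIn D a b) (hbx : b ≤ x)
    (hxa : x < a) : (D ∩ Set.Ioi x).ncard = (D ∩ Set.Ioi a).ncard + 1 :=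
  ncard_inter_Ioi_eq_add_one hD hp.2.1 hxa fun _ hy hxy => hp.le_of_mem hy (hbx.trans_lt hxy)

theorem PairedIn.mem_or_odd (hD : D.Finite) (hp : PairedIn D a b) (hbx : b ≤ x) (hxa : x ≤ a) :
    x ∈ D ∨ Odd (D ∩ Set.Ioi x).ncard := by
  by_cases hx : x ∈ D
  · exact Or.inl hx
  · have hxa' : x < a := hxa.lt_of_ne fun h => hx (h ▸ hp.2.1)
    exact Or.inr (hp.ncard_inter_Ioi hD hbx hxa' ▸ hp.2.2.2.1.add_one)

theorem PairedIn.even_ncard_inter_Ici (hD : D.Finite) (hp : PairedIn D a b) :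
    Even (D ∩ Set.Ici b).ncard := by
  rw [← Set.Ioi_insert, Set.inter_insert_of_mem hp.2.2.1,
    Set.ncard_insert_of_notMem (by simp) (hD.inter_of_left _), hp.ncard_inter_Ioi hD le_rfl hp.1]
  exact hp.2.2.2.1.add_one.add_one

theorem PairedIn.le_of_le (hD : D.Finite) {a' b' : ℕ} (hp : PairedIn D a b)
    (hp' : PairedIn D a' b') (hbx : b ≤ x) (hxa' : x ≤ a') : a ≤ a' := by
  by_contra! ha'a
  -- `a'` lies in `[b, a)`, hence equals `b`, and the ranks of `a` and `a'` then differ by one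
  have hab' : a' = b := le_antisymm (not_lt.1 fun hba' => ha'a.not_ge (hp.le_of_mem hp'.2.1 hba'))
    (hbx.trans hxa')
  have := hp'.2.2.2.1
  rw [hab', hp.ncard_inter_Ioi hD le_rfl hp.1] at this
  exact Nat.not_even_iff_odd.2 hp.2.2.2.1.add_one this

theorem PairedIn.eq (hD : D.Finite) {a' b' : ℕ} (hp : PairedIn D a b) (hp' : PairedIn D a' b')
    (hbx : b ≤ x) (hxa : x ≤ a) (hb'x : b' ≤ x) (hxa' : x ≤ a') : a = a' ∧ b = b' := by
  obtain rfl := le_antisymm (hp.le_of_le hD hp' hbx hxa') (hp'.le_of_le hD hp hb'x hxa)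
  exact ⟨rfl, le_antisymm (not_lt.1 fun hb'b => (hp'.le_of_mem hp.2.2.1 hb'b).not_gt hp.1)
    (not_lt.1 fun hbb' => (hp.le_of_mem hp'.2.2.1 hbb').not_gt hp'.1)⟩

theorem exists_pairedIn_of_even (hD : D.Finite) (heven : Even D.ncard) (ha : a ∈ D)
    (haeven : Even (D ∩ Set.Ioi a).ncard) : ∃ b, PairedIn D a b := by
  have hne : (D ∩ Set.Iio a).Nonempty := by
    by_contra! h
    have hDa : D = insert a (D ∩ Set.Ioi a) := by
      refine (Set.insert_subset ha Set.inter_subset_left).antisymm' fun y hy => ?_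
      rcases lt_trichotomy y a with hya | rfl | hay
      exacts [absurd ⟨hy, hya⟩ (h ▸ Set.notMem_empty y), Or.inl rfl, Or.inr ⟨hy, hay⟩]
    rw [hDa, Set.ncard_insert_of_notMem (by simp) (hD.inter_of_left _)] at heven
    exact Nat.not_even_iff_odd.2 haeven.add_one heven
  have hbdd : BddAbove (D ∩ Set.Iio a) := ⟨a, fun y hy => hy.2.le⟩
  obtain ⟨hbD, hba⟩ := Nat.sSup_mem hne hbdd
  refine ⟨sSup (D ∩ Set.Iio a), hba, ha, hbD, haeven, Set.eq_empty_of_forall_notMem ?_⟩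
  rintro y ⟨hy, hby, hya⟩
  exact hby.not_ge (le_csSup hbdd ⟨hy, hya⟩)

theorem exists_pairedIn (hD : D.Finite) (heven : Even D.ncard)
    (hx : x ∈ D ∨ Odd (D ∩ Set.Ioi x).ncard) : ∃ a b, PairedIn D a b ∧ b ≤ x ∧ x ≤ a := by
  by_cases hc : Even (D ∩ Set.Ioi x).ncard
  · obtain ⟨b, hp⟩ :=
      exists_pairedIn_of_even hD heven (hx.resolve_right (Nat.not_odd_iff_even.2 hc)) hc
    exact ⟨x, b, hp, hp.1.le, le_rfl⟩
  have hne : (D ∩ Set.Ioi x).Nonempty :=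
    Set.nonempty_of_ncard_ne_zero fun h0 => hc (h0 ▸ Even.zero)
  obtain ⟨haD, hxa⟩ := Nat.sInf_mem hne
  set a := sInf (D ∩ Set.Ioi x)
  have hmin : ∀ y ∈ D, x < y → a ≤ y := fun y hy hxy => Nat.sInf_le ⟨hy, hxy⟩
  have haeven : Even (D ∩ Set.Ioi a).ncard := by
    rw [ncard_inter_Ioi_eq_add_one hD haD hxa hmin, Nat.even_add_one] at hc
    exact not_not.1 hc
  obtain ⟨b, hp⟩ := exists_pairedIn_of_even hD heven haD haeven
  exact ⟨a, b, hp, not_lt.1 fun hxb => (hmin b hp.2.2.1 hxb).not_gt hp.1, hxa.le⟩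

end Pairing

section Intervals

/-- The common form of `IsIntervalS` and `IsIntervalOE`: `V` holds the values allowed in a paired
interval, `S` the values allowed as singleton intervals. -/
def IsIntervalOf (D V S : Set ℕ) (Δ : Set ℕ) : Prop :=
  (∃ a b, PairedIn D a b ∧ Δ = {i | i ∈ V ∧ b ≤ i ∧ i ≤ a}) ∨
  (∃ i ∈ S, (¬ ∃ a b, PairedIn D a b ∧ b ≤ i ∧ i ≤ a) ∧ Δ = {i})

theorem isIntervalS_iff {f : ℕ → ℕ} {Δ : Set ℕ} :
    IsIntervalS f Δ ↔ IsIntervalOf (Dsymp f) {i | i = 0 ∨ 1 ≤ mult f i}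
      {i | Even i ∧ (i = 0 ∨ (2 ≤ i ∧ 1 ≤ mult f i))} Δ := by
  simp only [IsIntervalS, IsIntervalOf, Set.mem_ofPred_eq, and_assoc]
  rfl

theorem isIntervalOE_iff {f : ℕ → ℕ} {Δ : Set ℕ} :
    IsIntervalOE f Δ ↔ IsIntervalOf (OddSet f) {i | 1 ≤ mult f i} {i | Odd i ∧ 1 ≤ mult f i} Δ := by
  simp only [IsIntervalOE, IsIntervalOf, Set.mem_ofPred_eq, and_assoc]
  rfl

variable {D V S : Set ℕ} {Δ Δ' : Set ℕ}

theorem IsIntervalOf.eq_of_mem (hD : D.Finite) (hΔ : IsIntervalOf D V S Δ)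
    (hΔ' : IsIntervalOf D V S Δ') {v : ℕ} (hv : v ∈ Δ) (hv' : v ∈ Δ') : Δ = Δ' := by
  rcases hΔ with ⟨a, b, hp, rfl⟩ | ⟨i, -, hi, rfl⟩ <;>
    rcases hΔ' with ⟨a', b', hp', rfl⟩ | ⟨i', -, hi', rfl⟩
  · obtain ⟨rfl, rfl⟩ := hp.eq hD hp' hv.2.1 hv.2.2 hv'.2.1 hv'.2.2
    rfl
  · obtain rfl := Set.mem_singleton_iff.1 hv'
    exact absurd ⟨a, b, hp, hv.2.1, hv.2.2⟩ hi'
  · obtain rfl := Set.mem_singleton_iff.1 hv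
    exact absurd ⟨a', b', hp', hv'.2.1, hv'.2.2⟩ hi
  · rw [← Set.mem_singleton_iff.1 hv, Set.mem_singleton_iff.1 hv']

theorem exists_isIntervalOf_mem {v : ℕ} (hV : v ∈ V) (hS : v ∈ S) :
    ∃ Δ, IsIntervalOf D V S Δ ∧ v ∈ Δ := by
  by_cases hc : ∃ a b, PairedIn D a b ∧ b ≤ v ∧ v ≤ a
  · obtain ⟨a, b, hp, hbv, hva⟩ := hc
    exact ⟨_, Or.inl ⟨a, b, hp, rfl⟩, hV, hbv, hva⟩
  · exact ⟨{v}, Or.inr ⟨v, hS, hc, rfl⟩, rfl⟩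

theorem IsIntervalOf.subset (hD : D.Finite) (hΔ : IsIntervalOf D V S Δ) {T : Set ℕ}
    (hST : S ⊆ T) (hVT : ∀ v ∈ V, v ∉ T → v ∉ D ∧ Even (D ∩ Set.Ioi v).ncard) : Δ ⊆ T := by
  rcases hΔ with ⟨a, b, hp, rfl⟩ | ⟨i, hi, -, rfl⟩
  · rintro v ⟨hv, hbv, hva⟩
    by_contra hvT
    obtain ⟨hvD, hveven⟩ := hVT v hv hvT
    exact (hp.mem_or_odd hD hbv hva).elim hvD (Nat.not_odd_iff_even.2 hveven)
  · exact Set.singleton_subset_iff.2 (hST hi)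

theorem IsIntervalOf.exists_eq (hD : D.Finite) (heven : Even D.ncard) (hDV : D ⊆ V) (hSV : S ⊆ V)
    (hΔ : IsIntervalOf D V S Δ) :
    ∃ b a, b ∈ V ∧ Δ = {i | i ∈ V ∧ b ≤ i ∧ i ≤ a} ∧
      Even (D ∩ Set.Ioi a).ncard ∧ Even (D ∩ Set.Ici b).ncard := by
  rcases hΔ with ⟨a, b, hp, rfl⟩ | ⟨i, hi, hnc, rfl⟩
  · exact ⟨b, a, hDV hp.2.2.1, rfl, hp.2.2.2.1, hp.even_ncard_inter_Ici hD⟩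
  obtain ⟨hiD, hiodd⟩ := not_or.1 (mt (exists_pairedIn hD heven) hnc)
  have hieven := Nat.not_odd_iff_even.1 hiodd
  refine ⟨i, i, hSV hi, ?_, hieven, ?_⟩
  · ext v
    simp only [Set.mem_singleton_iff, Set.mem_ofPred_eq]
    exact ⟨by rintro rfl; exact ⟨hSV hi, le_rfl, le_rfl⟩, fun ⟨_, h₁, h₂⟩ => le_antisymm h₂ h₁⟩
  · rwa [← Set.Ioi_insert, Set.inter_insert_of_notMem hiD]

end Intervals

section Bands

variable {f : ℕ → ℕ} {N : ℕ} {J : Set ℕ} {j : ℕ}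

/-- The shape of `J(Δ)` for an interval `Δ` with values in `[b, a]`. -/
def IsEvenBand (f : ℕ → ℕ) (J : Set ℕ) : Prop :=
  ∃ b a, J = {j | 1 ≤ j ∧ b ≤ f j ∧ f j ≤ a} ∧ Even (OddSet f ∩ Set.Ici (a + 1)).ncard ∧
    (1 ≤ b → Even (OddSet f ∩ Set.Ici b).ncard)

theorem IsEvenBand.ordConnected (h : IsPartition f N) (hJ : IsEvenBand f J) : J.OrdConnected := by
  obtain ⟨b, a, rfl, -, -⟩ := hJ
  exact ⟨fun j hj k hk l hl => ⟨hj.1.trans hl.1, hk.2.1.trans (h.mono (hj.1.trans hl.1) hl.2),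
    (h.mono hj.1 hl.1).trans hj.2.2⟩⟩

theorem IsEvenBand.odd_of_isLeast (h : IsPartition f N) (hJ : IsEvenBand f J)
    (hj : IsLeast J j) : Odd j := by
  obtain ⟨b, a, rfl, htop, -⟩ := hJ
  obtain ⟨⟨hj, hbj, hja⟩, hmin⟩ := hj
  have hK : ∀ k, 1 ≤ k → (a + 1 ≤ f k ↔ k ≤ j - 1) := by
    refine fun k hk => ⟨fun hak => ?_, fun hkj => ?_⟩
    · by_contra! hkj
      have := h.mono hj (show j ≤ k by omega)
      omega
    · by_contra! hak
      have := hmin ⟨hk, hbj.trans (h.mono hk (show k ≤ j by omega)), by omega⟩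
      omega
  have := Nat.even_iff.1 ((h.even_iff_even_ncard_oddSet_Ici hK).2 htop)
  rw [Nat.odd_iff]
  omega

theorem IsEvenBand.even_of_isGreatest (h : IsPartition f N) (hJ : IsEvenBand f J)
    (hj : IsGreatest J j) : Even j := by
  obtain ⟨b, a, rfl, -, hbot⟩ := hJ
  obtain ⟨⟨hj, hbj, hja⟩, hmax⟩ := hj
  obtain ⟨M, hM⟩ := h.fin
  have hb : 1 ≤ b := by
    by_contra! hb0
    have := @hmax (max j M + 1) ⟨by omega, by omega, by rw [hM _ (by omega)]; omega⟩
    omega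
  have hK : ∀ k, 1 ≤ k → (b ≤ f k ↔ k ≤ j) := by
    refine fun k hk => ⟨fun hbk => ?_, fun hkj => hbj.trans (h.mono hk hkj)⟩
    by_contra! hjk
    exact hjk.not_ge (hmax ⟨hk, hbk, (h.mono hj hjk.le).trans hja⟩)
  exact (h.even_iff_even_ncard_oddSet_Ici hK).2 (hbot hb)

theorem IsIntervalOf.isEvenBand_jset {D V S Δ : Set ℕ} (hD : D.Finite) (heven : Even D.ncard)
    (hDV : D ⊆ V) (hSV : S ⊆ V) (hDodd : ∀ x, 1 ≤ x → D ∩ Set.Ici x = OddSet f ∩ Set.Ici x)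
    (hV : ∀ v ∈ V, ∀ j, 1 ≤ j → v ≤ f j → f j ∈ V) (hΔ : IsIntervalOf D V S Δ) :
    IsEvenBand f (Jset f Δ) := by
  obtain ⟨b, a, hb, rfl, htop, hbot⟩ := hΔ.exists_eq hD heven hDV hSV
  refine ⟨b, a, ?_, ?_, fun hb1 => hDodd b hb1 ▸ hbot⟩
  · ext j
    simp only [Jset, Set.mem_ofPred_eq]
    exact ⟨fun ⟨hj, _, hbj, hja⟩ => ⟨hj, hbj, hja⟩,
      fun ⟨hj, hbj, hja⟩ => ⟨hj, hV b hb j hj hbj, hbj, hja⟩⟩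
  · rwa [← hDodd _ (Nat.le_add_left 1 a), Set.Ici_add_one_eq_Ioi]

end Bands

section IntervalBlocks

variable {f : ℕ → ℕ} {N : ℕ}

def symplecticBlocks (f : ℕ → ℕ) : Set (Set ℕ) := Jset f '' {Δ | IsIntervalS f Δ}

def orthogonalBlocks (f : ℕ → ℕ) : Set (Set ℕ) := Jset f '' {Δ | IsIntervalOE f Δ}

variable {P : Set ℕ → Prop} {D V S : Set ℕ}

theorem pairwiseDisjoint_jset (hP : ∀ Δ, P Δ ↔ IsIntervalOf D V S Δ) (hD : D.Finite) :
    (Jset f '' {Δ | P Δ}).PairwiseDisjoint id := by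
  rintro _ ⟨Δ, hΔ, rfl⟩ _ ⟨Δ', hΔ', rfl⟩ hne
  refine Set.disjoint_left.2 fun j hj hj' => hne ?_
  rw [((hP Δ).1 hΔ).eq_of_mem hD ((hP Δ').1 hΔ') hj.2 hj'.2]

theorem sUnion_jset (hP : ∀ Δ, P Δ ↔ IsIntervalOf D V S Δ) {T : Set ℕ}
    (hsub : ∀ Δ, IsIntervalOf D V S Δ → Δ ⊆ T)
    (hcover : ∀ j, 1 ≤ j → f j ∈ T → f j ∈ V ∧ f j ∈ S) :
    ⋃₀ (Jset f '' {Δ | P Δ}) = {j | 1 ≤ j ∧ f j ∈ T} := by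
  ext j
  simp only [Set.sUnion_image, Set.mem_iUnion, Set.mem_ofPred_eq, exists_prop, hP]
  constructor
  · rintro ⟨Δ, hΔ, hj, hjΔ⟩
    exact ⟨hj, hsub Δ hΔ hjΔ⟩
  · rintro ⟨hj, hjT⟩
    obtain ⟨Δ, hΔ, hjΔ⟩ := exists_isIntervalOf_mem (D := D) (hcover j hj hjT).1 (hcover j hj hjT).2
    exact ⟨Δ, hΔ, hj, hjΔ⟩

theorem dsymp_inter_Ici {x : ℕ} (hx : 1 ≤ x) : Dsymp f ∩ Set.Ici x = OddSet f ∩ Set.Ici x := by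
  ext i
  simp only [Set.mem_inter_iff, Set.mem_Ici, Dsymp, OddSet, Set.mem_ofPred_eq]
  constructor
  · rintro ⟨hi | ⟨rfl, -⟩, hxi⟩
    exacts [⟨hi, hxi⟩, absurd hxi (by omega)]
  · exact fun ⟨hi, hxi⟩ => ⟨Or.inl hi, hxi⟩

theorem dsymp_inter_Ioi (x : ℕ) : Dsymp f ∩ Set.Ioi x = OddSet f ∩ Set.Ioi x := by
  rw [← Set.Ici_add_one_eq_Ioi, dsymp_inter_Ici (Nat.le_add_left 1 x)]

theorem IsPartition.dsymp_finite_and_even (h : IsPartition f N) :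
    (Dsymp f).Finite ∧ Even (Dsymp f).ncard := by
  by_cases hodd : Odd (OddSet f).ncard
  · have hD : Dsymp f = insert 0 (OddSet f) := by
      ext i
      simp only [Dsymp, OddSet, Set.mem_insert_iff, Set.mem_ofPred_eq]
      tauto
    have h0 : 0 ∉ OddSet f := fun h0 => h.one_le_of_one_le_mult h0.pos |>.not_gt Nat.one_pos
    rw [hD, Set.ncard_insert_of_notMem h0 h.oddSet_finite]
    exact ⟨h.oddSet_finite.insert 0, hodd.add_one⟩
  · have hD : Dsymp f = OddSet f := by
      ext i
      simp only [Dsymp, OddSet, Set.mem_ofPred_eq]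
      tauto
    rw [hD]
    exact ⟨h.oddSet_finite, Nat.not_odd_iff_even.1 hodd⟩

theorem IsPartition.isEvenBand_of_mem_symplecticBlocks (h : IsPartition f N) {J : Set ℕ}
    (hJ : J ∈ symplecticBlocks f) : IsEvenBand f J := by
  obtain ⟨Δ, hΔ, rfl⟩ := hJ
  obtain ⟨hfin, heven⟩ := h.dsymp_finite_and_even
  refine (isIntervalS_iff.1 hΔ).isEvenBand_jset hfin heven (fun i hi => ?_)
    (fun i hi => hi.2.imp_right And.right) (fun x hx => dsymp_inter_Ici hx) (fun _ _ j hj _ => ?_)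
  · rcases hi with hi | ⟨rfl, -⟩
    exacts [Or.inr hi.pos, Or.inl rfl]
  · by_cases hfj : f j = 0
    exacts [Or.inl hfj, Or.inr (h.one_le_mult_apply hj hfj)]

theorem IsPartition.isEvenBand_of_mem_orthogonalBlocks (h : IsPartition f N) (ho : Orth f)
    (hsp : SpecialPairs f) {J : Set ℕ} (hJ : J ∈ orthogonalBlocks f) : IsEvenBand f J := by
  obtain ⟨Δ, hΔ, rfl⟩ := hJ
  refine (isIntervalOE_iff.1 hΔ).isEvenBand_jset h.oddSet_finite (h.even_ncard_oddSet ho hsp)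
    (fun i hi => hi.pos) (fun i hi => hi.2) (fun x _ => rfl) (fun v hv j hj hvj => ?_)
  exact h.one_le_mult_apply hj (by have := h.one_le_of_one_le_mult hv; omega)

theorem IsPartition.isBlockFamily_symplecticBlocks (h : IsPartition f N) :
    IsBlockFamily (symplecticBlocks f) :=
  ⟨fun _ hJ => (h.isEvenBand_of_mem_symplecticBlocks hJ).ordConnected h,
    pairwiseDisjoint_jset (fun _ => isIntervalS_iff) h.dsymp_finite_and_even.1⟩

theorem IsPartition.isBlockFamily_orthogonalBlocks (h : IsPartition f N) (ho : Orth f)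
    (hsp : SpecialPairs f) : IsBlockFamily (orthogonalBlocks f) :=
  ⟨fun _ hJ => (h.isEvenBand_of_mem_orthogonalBlocks ho hsp hJ).ordConnected h,
    pairwiseDisjoint_jset (fun _ => isIntervalOE_iff) h.oddSet_finite⟩

theorem IsPartition.sUnion_symplecticBlocks (h : IsPartition f N) (hs : Symp f)
    (hsp : SpecialPairs f) : ⋃₀ symplecticBlocks f = {j | 1 ≤ j ∧ Even (f j)} := by
  refine sUnion_jset (fun _ => isIntervalS_iff) (T := {v | Even v})
    (fun Δ hΔ => hΔ.subset h.dsymp_finite_and_even.1 (fun v hv => hv.1) fun v hv hvT => ?_)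
    fun j hj hfj => ?_
  · have hodd : Odd v := Nat.not_even_iff_odd.1 hvT
    have hm : 1 ≤ mult f v := hv.resolve_left (by rintro rfl; exact hvT Even.zero)
    refine ⟨?_, ?_⟩
    · rintro (hvD | ⟨rfl, -⟩)
      exacts [Nat.not_odd_iff_even.2 (hs v hodd) hvD, hvT Even.zero]
    · rw [dsymp_inter_Ioi]
      exact h.even_ncard_oddSet_Ioi hsp (p := 1) (fun i _ hi => hs i (Nat.odd_iff.2 hi))
        (Nat.odd_iff.1 hodd) hm
  · by_cases hfj0 : f j = 0
    · exact ⟨Or.inl hfj0, hfj, Or.inl hfj0⟩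
    · have hm := h.one_le_mult_apply hj hfj0
      exact ⟨Or.inr hm, hfj, Or.inr ⟨by obtain ⟨k, hk⟩ := hfj; omega, hm⟩⟩

theorem IsPartition.sUnion_orthogonalBlocks (h : IsPartition f N) (ho : Orth f)
    (hsp : SpecialPairs f) : ⋃₀ orthogonalBlocks f = {j | 1 ≤ j ∧ Odd (f j)} := by
  refine sUnion_jset (fun _ => isIntervalOE_iff) (T := {v | Odd v})
    (fun Δ hΔ => hΔ.subset h.oddSet_finite (fun v hv => hv.1) fun v hv hvT => ?_)
    fun j hj hfj => ?_
  · have heven : Even v := Nat.not_odd_iff_even.1 hvT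
    have hv1 : 1 ≤ v := h.one_le_of_one_le_mult hv
    exact ⟨Nat.not_odd_iff_even.2 (ho v heven hv1), h.even_ncard_oddSet_Ioi hsp (p := 0)
      (fun i hi1 hi => ho i (Nat.even_iff.2 hi) hi1) (Nat.even_iff.1 heven) hv⟩
  · have hm := h.one_le_mult_apply hj (by rintro h0; rw [h0] at hfj; exact Nat.not_odd_zero hfj)
    exact ⟨hm, hfj, hm⟩

end IntervalBlocks

theorem jplusSet_eq_blockStarts {f1 f2 : ℕ → ℕ}
    (hU₁ : ⋃₀ symplecticBlocks f1 = {j | 1 ≤ j ∧ Even (f1 j)})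
    (hU₂ : ⋃₀ orthogonalBlocks f2 = {j | 1 ≤ j ∧ Odd (f2 j)}) :
    JplusSet f1 f2 = blockStarts (symplecticBlocks f1) (orthogonalBlocks f2) := by
  ext j
  rw [blockStarts, hU₁, hU₂]
  simp only [JplusSet, symplecticBlocks, orthogonalBlocks, Set.mem_union, Set.mem_inter_iff,
    Set.mem_ofPred_eq, or_and_right, exists_or, Set.exists_mem_image, and_assoc]
  exact ⟨fun ⟨hj, h₁, h₂, h⟩ => ⟨hj, h₁, hj, h₂, h⟩, fun ⟨hj, h₁, _, h₂, h⟩ => ⟨hj, h₁, h₂, h⟩⟩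

theorem jminusSet_eq_blockEnds {f1 f2 : ℕ → ℕ}
    (hU₁ : ⋃₀ symplecticBlocks f1 = {j | 1 ≤ j ∧ Even (f1 j)})
    (hU₂ : ⋃₀ orthogonalBlocks f2 = {j | 1 ≤ j ∧ Odd (f2 j)}) :
    JminusSet f1 f2 = blockEnds (symplecticBlocks f1) (orthogonalBlocks f2) := by
  ext j
  rw [blockEnds, hU₁, hU₂]
  simp only [JminusSet, symplecticBlocks, orthogonalBlocks, Set.mem_union, Set.mem_inter_iff,
    Set.mem_ofPred_eq, or_and_right, exists_or, Set.exists_mem_image, and_assoc]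
  exact ⟨fun ⟨hj, h₁, h₂, h⟩ => ⟨hj, h₁, hj, h₂, h⟩, fun ⟨hj, h₁, _, h₂, h⟩ => ⟨hj, h₁, h₂, h⟩⟩

/-- Section 1.9: `J^+` consists of odd indices, `J^-` of even indices, they are
finite of the same cardinality `r`, and they interleave as
`j_1^+ < j_1^- < j_2^+ < j_2^- < … < j_r^+ < j_r^-`. -/
theorem stmt6 (n1 n2 : ℕ)
    (f1 : ℕ → ℕ) (h1 : IsPartition f1 (2*n1)) (h1s : Symp f1) (h1sp : SpecialPairs f1)
    (f2 : ℕ → ℕ) (h2 : IsPartition f2 (2*n2)) (h2o : Orth f2) (h2sp : SpecialPairs f2) :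
    (∀ j ∈ JplusSet f1 f2, Odd j) ∧
    (∀ j ∈ JminusSet f1 f2, Even j) ∧
    (JplusSet f1 f2).Finite ∧ (JminusSet f1 f2).Finite ∧
    ∃ (r : ℕ) (jp jm : Fin r → ℕ),
      (JplusSet f1 f2).ncard = r ∧ (JminusSet f1 f2).ncard = r ∧
      StrictMono jp ∧ StrictMono jm ∧
      Set.range jp = JplusSet f1 f2 ∧ Set.range jm = JminusSet f1 f2 ∧
      (∀ i : Fin r, jp i < jm i) ∧
      (∀ (i : Fin r) (h : (i : ℕ) + 1 < r), jm i < jp ⟨(i : ℕ) + 1, h⟩) := by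
  have hU₁ := h1.sUnion_symplecticBlocks h1s h1sp
  have hU₂ := h2.sUnion_orthogonalBlocks h2o h2sp
  rw [jplusSet_eq_blockStarts hU₁ hU₂, jminusSet_eq_blockEnds hU₁ hU₂]
  have hodd : ∀ j ∈ blockStarts (symplecticBlocks f1) (orthogonalBlocks f2), Odd j := by
    rintro j ⟨-, J, hJ | hJ, hj⟩
    exacts [(h1.isEvenBand_of_mem_symplecticBlocks hJ).odd_of_isLeast h1 hj,
      (h2.isEvenBand_of_mem_orthogonalBlocks h2o h2sp hJ).odd_of_isLeast h2 hj]
  have heven : ∀ j ∈ blockEnds (symplecticBlocks f1) (orthogonalBlocks f2), Even j := by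
    rintro j ⟨-, J, hJ | hJ, hj⟩
    exacts [(h1.isEvenBand_of_mem_symplecticBlocks hJ).even_of_isGreatest h1 hj,
      (h2.isEvenBand_of_mem_orthogonalBlocks h2o h2sp hJ).even_of_isGreatest h2 hj]
  have hbdd : BddAbove (⋃₀ symplecticBlocks f1 ∩ ⋃₀ orthogonalBlocks f2) := by
    obtain ⟨M, hM⟩ := h2.fin
    refine ⟨M, fun j hj => not_lt.1 fun hMj => ?_⟩
    have hodd₂ : Odd (f2 j) := (hU₂ ▸ hj.2).2
    exact Nat.not_odd_zero (hM j hMj ▸ hodd₂)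
  exact ⟨hodd, heven, exists_interleaving_blockStarts_blockEnds h1.isBlockFamily_symplecticBlocks
    (h2.isBlockFamily_orthogonalBlocks h2o h2sp) hbdd
    (Set.disjoint_left.2 fun j hp hm => Nat.not_even_iff_odd.2 (hodd j hp) (heven j hm))⟩

end Wald
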